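/- arXiv:1703.01279 — 5 statements merged into one kernel-verified Lean document; each statement's English description precedes it below -/
import Mathlib

section
/- Alzer's inequality: for every integer N ≥ 2 and every real x > 0, e^{−x} · Σ_{k=0}^{N−1} x^k / k! < 1 − (1 − e^{−c·x})^N, where c = (N!)^{−1/N}. -/
/-!
Write `F(x) = 1 - e^{-x} ∑_{k ≤ n} x^k / k!` (the Gamma(n+1) distribution function) and
`G(x) = (1 - e^{-cx})^{n+1}`. Both rise from `0` to `1`, so `h = F - G` vanishes at `0` and at `∞`,
and `h > 0` on `(0, ∞)` as soon as `h'` changes sign at most once, from `+` to `-`. Now `h'` has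
the sign of `L = log F' - log G'`, and `L' = n c ψ(cx) - (1 - c)` with `ψ(t) = 1/t - 1/(e^t - 1)`
strictly decreasing, so `L` is strictly concave. The normalisation `c^{n+1} (n+1)! = 1` is exactly
what makes `F'` and `G'` agree to leading order `x^n / n!` at `0`, i.e. `L(0+) = 0`; a strictly
concave function vanishing at `0+` that is `≤ 0` somewhere stays `< 0` afterwards.
-/

open Real Finset Filter Set Topology
open scoped Nat

lemma neg_of_nonpos_of_strictAntiOn_deriv {g g' : ℝ → ℝ}
    (hg : ∀ x > 0, HasDerivAt g (g' x) x) (hg' : StrictAntiOn g' (Ioi 0))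
    (hlim : Tendsto g (𝓝[>] 0) (𝓝 0)) {x y : ℝ} (hx : 0 < x) (hxy : x < y) (hgx : g x ≤ 0) :
    g y < 0 := by
  have hcont : ContinuousOn g (Ioi 0) := fun z hz => (hg z hz).continuousAt.continuousWithinAt
  have hg'x : g' x ≤ 0 := by
    by_contra! hpos
    have hmono : StrictMonoOn g (Ioc 0 x) :=
      strictMonoOn_of_hasDerivWithinAt_pos (convex_Ioc 0 x) (hcont.mono Ioc_subset_Ioi_self)
        (fun z hz => (hg z (interior_subset hz).1).hasDerivWithinAt)
        (fun z hz => by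
          rw [interior_Ioc] at hz
          exact hpos.trans (hg' hz.1 hx hz.2))
    have hhalf : x / 2 ∈ Ioc 0 x := ⟨half_pos hx, half_le_self hx.le⟩
    have hg_half : 0 ≤ g (x / 2) := le_of_tendsto hlim <| by
      filter_upwards [Ioo_mem_nhdsGT hhalf.1] with z hz
      exact (hmono ⟨hz.1, hz.2.le.trans hhalf.2⟩ hhalf hz.2).le
    linarith [hmono hhalf ⟨hx, le_rfl⟩ (half_lt_self hx)]
  have hanti : StrictAntiOn g (Ici x) :=
    strictAntiOn_of_hasDerivWithinAt_neg (convex_Ici x) (hcont.mono fun z hz => hx.trans_le hz)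
      (fun z hz => (hg z (hx.trans_le (interior_subset hz))).hasDerivWithinAt)
      (fun z hz => by
        rw [interior_Ici] at hz
        exact (hg' hx (hx.trans hz) hz).trans_le hg'x)
  exact (hanti self_mem_Ici hxy.le hxy).trans_le hgx

lemma pos_of_tendsto_zero_of_deriv_pos_then_neg {h h' : ℝ → ℝ} (hcont : ContinuousOn h (Ici 0))
    (hd : ∀ x > 0, HasDerivAt h (h' x) x) (h0 : h 0 = 0) (hlim : Tendsto h atTop (𝓝 0))
    (hsign : ∀ x y, 0 < x → x < y → h' x ≤ 0 → h' y < 0) {x : ℝ} (hx : 0 < x) : 0 < h x := by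
  by_cases! H : ∀ y ∈ Ioo 0 x, 0 < h' y
  · have hmono : StrictMonoOn h (Icc 0 x) :=
      strictMonoOn_of_hasDerivWithinAt_pos (convex_Icc 0 x) (hcont.mono Icc_subset_Ici_self)
        (fun y hy => by
          rw [interior_Icc] at hy ⊢
          exact (hd y hy.1).hasDerivWithinAt)
        (by simpa only [interior_Icc] using H)
    simpa [h0] using hmono (left_mem_Icc.2 hx.le) (right_mem_Icc.2 hx.le) hx
  · obtain ⟨y, hy, hy'⟩ := H
    have hanti : StrictAntiOn h (Ici x) :=
      strictAntiOn_of_hasDerivWithinAt_neg (convex_Ici x)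
        (hcont.mono fun z hz => hx.le.trans hz)
        (fun z hz => (hd z (hx.trans_le (interior_subset hz))).hasDerivWithinAt)
        (fun z hz => by
          rw [interior_Ici] at hz
          exact hsign y z hy.1 (hy.2.trans hz) hy')
    have hx1 : x + 1 ∈ Ici x := by simp
    have hge : 0 ≤ h (x + 1) := le_of_tendsto hlim <| by
      filter_upwards [eventually_ge_atTop (x + 1)] with z hz
      exact hanti.antitoneOn hx1 (hx1.trans hz) hz
    linarith [hanti self_mem_Ici hx1 (lt_add_one x)]

lemma sq_mul_exp_lt_sq_exp_sub_one {t : ℝ} (ht : 0 < t) : t ^ 2 * exp t < (exp t - 1) ^ 2 := by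
  set s := exp (t / 2)
  have hs : 0 < s := exp_pos _
  have hexp : exp t = s ^ 2 := by rw [← exp_nat_mul]; ring_nf
  have hsinh : t / 2 < sinh (t / 2) := self_lt_sinh_iff.2 (half_pos ht)
  have hlin : t * s < s ^ 2 - 1 := by
    rw [sinh_eq, exp_neg] at hsinh
    have : t < s - s⁻¹ := by linarith
    calc t * s < (s - s⁻¹) * s := mul_lt_mul_of_pos_right this hs
      _ = s ^ 2 - 1 := by field_simp
  rw [hexp, ← mul_pow]
  exact pow_lt_pow_left₀ hlin (by positivity) two_ne_zero

lemma strictAntiOn_inv_sub_inv_exp_sub_one :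
    StrictAntiOn (fun t : ℝ => t⁻¹ - (exp t - 1)⁻¹) (Ioi 0) := by
  have hd : ∀ t > (0 : ℝ), HasDerivAt (fun t : ℝ => t⁻¹ - (exp t - 1)⁻¹)
      (-(t ^ 2)⁻¹ - -exp t / (exp t - 1) ^ 2) t := fun t ht =>
    (hasDerivAt_inv ht.ne').sub
      (((hasDerivAt_exp t).sub_const 1).inv (sub_pos.2 (one_lt_exp_iff.2 ht)).ne')
  refine strictAntiOn_of_hasDerivWithinAt_neg (convex_Ioi 0)
    (fun t ht => (hd t ht).continuousAt.continuousWithinAt)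
    (fun t ht => (hd t (interior_subset ht)).hasDerivWithinAt) fun t ht => ?_
  rw [interior_Ioi, Set.mem_Ioi] at ht
  have hE : 0 < exp t - 1 := sub_pos.2 (one_lt_exp_iff.2 ht)
  have : exp t / (exp t - 1) ^ 2 < (t ^ 2)⁻¹ := by
    rw [div_lt_iff₀ (by positivity), inv_mul_eq_div, lt_div_iff₀ (by positivity), mul_comm]
    exact sq_mul_exp_lt_sq_exp_sub_one ht
  rw [neg_div]
  linarith

noncomputable def expPartialSum (n : ℕ) (x : ℝ) : ℝ := ∑ k ∈ range n, x ^ k / k !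

lemma hasDerivAt_expPartialSum_succ (n : ℕ) (x : ℝ) :
    HasDerivAt (expPartialSum (n + 1)) (expPartialSum n x) x := by
  have h : HasDerivAt (expPartialSum (n + 1)) (∑ k ∈ range (n + 1), k * x ^ (k - 1) / k !) x :=
    .fun_sum fun k _ => (hasDerivAt_pow k x).div_const _
  convert h using 1
  rw [sum_range_succ', Nat.cast_zero, zero_mul, zero_div, add_zero, expPartialSum]
  refine sum_congr rfl fun k _ => ?_
  rw [Nat.factorial_succ, Nat.add_sub_cancel]
  push_cast
  field_simp

lemma hasDerivAt_one_sub_exp_neg_mul_expPartialSum (n : ℕ) (x : ℝ) :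
    HasDerivAt (fun x => 1 - exp (-x) * expPartialSum (n + 1) x) (x ^ n * exp (-x) / n !) x := by
  refine (((hasDerivAt_neg x).exp.mul (hasDerivAt_expPartialSum_succ n x)).const_sub 1
    ).congr_deriv ?_
  simp only [expPartialSum, sum_range_succ]
  ring

lemma hasDerivAt_one_sub_exp_neg_mul (c x : ℝ) :
    HasDerivAt (fun x => 1 - exp (-(c * x))) (c * exp (-(c * x))) x := by
  refine ((((hasDerivAt_id' x).const_mul c).neg.exp).const_sub 1).congr_deriv ?_
  simp [mul_comm]

lemma hasDerivAt_one_sub_exp_neg_mul_pow (n : ℕ) (c x : ℝ) :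
    HasDerivAt (fun x => (1 - exp (-(c * x))) ^ (n + 1))
      ((n + 1) * c * exp (-(c * x)) * (1 - exp (-(c * x))) ^ n) x := by
  refine ((hasDerivAt_one_sub_exp_neg_mul c x).pow (n + 1)).congr_deriv ?_
  push_cast
  ring

-- `log (F' x / G' x)` for the two derivatives computed above, expanded so that it can be
-- differentiated termwise.
noncomputable def logRatio (n : ℕ) (c x : ℝ) : ℝ :=
  n * log x - x - log n ! - (log ((n + 1) * c) - c * x + n * log (1 - exp (-(c * x))))

section logRatio

variable {n : ℕ} {c x : ℝ}

lemma one_sub_exp_neg_mul_pos (hc : 0 < c) (hx : 0 < x) : 0 < 1 - exp (-(c * x)) := by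
  rw [sub_pos, exp_lt_one_iff]
  nlinarith

lemma exp_logRatio_mul (hc : 0 < c) (hx : 0 < x) :
    exp (logRatio n c x) * ((n + 1) * c * exp (-(c * x)) * (1 - exp (-(c * x))) ^ n) =
      x ^ n * exp (-x) / n ! := by
  have h1 := one_sub_exp_neg_mul_pos hc hx
  rw [logRatio]
  generalize 1 - exp (-(c * x)) = E at h1 ⊢
  simp only [exp_sub, exp_add, exp_nat_mul, exp_log hx, exp_log h1,
    exp_log (Nat.cast_pos.2 n.factorial_pos), exp_log (show (0 : ℝ) < (n + 1) * c by positivity)]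
  simp only [exp_neg]
  field_simp

lemma hasDerivAt_logRatio (hc : 0 < c) (hx : 0 < x) :
    HasDerivAt (logRatio n c) (n * c * ((c * x)⁻¹ - (exp (c * x) - 1)⁻¹) - (1 - c)) x := by
  have h1 := one_sub_exp_neg_mul_pos hc hx
  have hlog := ((hasDerivAt_log h1.ne').comp x (hasDerivAt_one_sub_exp_neg_mul c x))
  refine (((((hasDerivAt_log hx.ne').const_mul (n : ℝ)).sub (hasDerivAt_id' x)).sub_const _).sub
    ((((hasDerivAt_id' x).const_mul c).const_sub _).add (hlog.const_mul (n : ℝ)))).congr_deriv ?_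
  have hE : 1 < exp (c * x) := one_lt_exp_iff.2 (by positivity)
  rw [exp_neg]
  field_simp
  ring

lemma tendsto_logRatio_nhdsGT_zero (hc0 : 0 < c) (hc : c ^ (n + 1) * (n + 1)! = 1) :
    Tendsto (logRatio n c) (𝓝[>] 0) (𝓝 0) := by
  have hslope : Tendsto (fun x => (1 - exp (-(c * x))) / x) (𝓝[>] 0) (𝓝 c) := by
    simpa [div_eq_inv_mul] using (hasDerivAt_one_sub_exp_neg_mul c 0).tendsto_slope_zero_right
  have hlim : Tendsto (fun x => -n * log ((1 - exp (-(c * x))) / x) + (c - 1) * x - log n ! -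
      log ((n + 1) * c)) (𝓝[>] 0) (𝓝 (-n * log c + (c - 1) * 0 - log n ! - log ((n + 1) * c))) :=
    ((((continuousAt_log hc0.ne').tendsto.comp hslope).const_mul _).add
      ((continuous_const.mul continuous_id).tendsto 0 |>.mono_left nhdsWithin_le_nhds)
      |>.sub_const _).sub_const _
  have hlogc : (n + 1) * log c + log (n + 1) + log n ! = 0 := by
    have := congrArg log hc
    rw [log_one, log_mul (by positivity) (by positivity), log_pow, Nat.factorial_succ,
      Nat.cast_mul, log_mul (by positivity) (by positivity)] at this
    push_cast at this
    linarith
  rw [log_mul (by positivity) hc0.ne',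
    show -n * log c + (c - 1) * 0 - log n ! - (log (n + 1) + log c) = 0 by linarith] at hlim
  refine hlim.congr' ?_
  filter_upwards [self_mem_nhdsWithin] with x (hx : 0 < x)
  rw [logRatio, log_div (one_sub_exp_neg_mul_pos hc0 hx).ne' hx.ne',
    log_mul (by positivity) hc0.ne']
  ring

end logRatio

lemma strictAntiOn_deriv_logRatio {n : ℕ} {c : ℝ} (hn : 0 < n) (hc : 0 < c) :
    StrictAntiOn (fun x => n * c * ((c * x)⁻¹ - (exp (c * x) - 1)⁻¹) - (1 - c)) (Ioi 0) :=
  fun x hx y hy hxy => sub_lt_sub_right (mul_lt_mul_of_pos_left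
    (strictAntiOn_inv_sub_inv_exp_sub_one (mul_pos hc hx) (mul_pos hc hy)
      (mul_lt_mul_of_pos_left hxy hc)) (by positivity)) _

lemma tendsto_exp_neg_mul_expPartialSum_atTop (n : ℕ) :
    Tendsto (fun x => exp (-x) * expPartialSum n x) atTop (𝓝 0) := by
  simp only [expPartialSum, mul_sum]
  simpa using tendsto_finsetSum (range n) fun k _ =>
    ((tendsto_pow_mul_exp_neg_atTop_nhds_zero k).div_const (k ! : ℝ)).congr fun x => by ring

lemma tendsto_one_sub_exp_neg_mul_pow_atTop (n : ℕ) {c : ℝ} (hc : 0 < c) :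
    Tendsto (fun x => (1 - exp (-(c * x))) ^ n) atTop (𝓝 1) := by
  simpa using ((tendsto_exp_neg_atTop_nhds_zero.comp
    (tendsto_id.const_mul_atTop hc)).const_sub 1).pow n

theorem exp_neg_mul_expPartialSum_lt {n : ℕ} {c x : ℝ} (hn : 0 < n) (hc0 : 0 < c)
    (hc : c ^ (n + 1) * (n + 1)! = 1) (hx : 0 < x) :
    exp (-x) * expPartialSum (n + 1) x < 1 - (1 - exp (-(c * x))) ^ (n + 1) := by
  set G' := fun x => (n + 1) * c * exp (-(c * x)) * (1 - exp (-(c * x))) ^ n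
  have hd (y : ℝ) : HasDerivAt
      (fun x => (1 - exp (-x) * expPartialSum (n + 1) x) - (1 - exp (-(c * x))) ^ (n + 1))
      (y ^ n * exp (-y) / (n !) - G' y) y :=
    (hasDerivAt_one_sub_exp_neg_mul_expPartialSum n y).sub
      (hasDerivAt_one_sub_exp_neg_mul_pow n c y)
  have hG' {y : ℝ} (hy : 0 < y) : 0 < G' y := by
    have := one_sub_exp_neg_mul_pos hc0 hy
    positivity
  have hsign_le {y : ℝ} (hy : 0 < y) :
      y ^ n * exp (-y) / (n !) - G' y ≤ 0 ↔ logRatio n c y ≤ 0 := by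
    rw [← exp_logRatio_mul hc0 hy, sub_nonpos, mul_le_iff_le_one_left (hG' hy), exp_le_one_iff]
  have hsign_lt {y : ℝ} (hy : 0 < y) :
      y ^ n * exp (-y) / (n !) - G' y < 0 ↔ logRatio n c y < 0 := by
    rw [← exp_logRatio_mul hc0 hy, sub_neg, mul_lt_iff_lt_one_left (hG' hy), exp_lt_one_iff]
  have hpos := pos_of_tendsto_zero_of_deriv_pos_then_neg
    (fun y _ => (hd y).continuousAt.continuousWithinAt) (fun y _ => hd y)
    (by simp [expPartialSum, sum_range_succ'])
    (by simpa using ((tendsto_exp_neg_mul_expPartialSum_atTop (n + 1)).const_sub 1).sub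
          (tendsto_one_sub_exp_neg_mul_pow_atTop (n + 1) hc0))
    (fun x y hx hxy hle => (hsign_lt (hx.trans hxy)).2 <|
      neg_of_nonpos_of_strictAntiOn_deriv (fun x hx => hasDerivAt_logRatio hc0 hx)
        (strictAntiOn_deriv_logRatio hn hc0) (tendsto_logRatio_nhdsGT_zero hc0 hc) hx hxy
        ((hsign_le hx).1 hle)) hx
  linarith

/-- Alzer's inequality: for `N ≥ 2`, `x > 0`, with `c = (N!)^{−1/N}`,
`e^{−x} ∑_{k<N} x^k/k! < 1 − (1 − e^{−cx})^N`. -/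
theorem alzer_inequality (N : ℕ) (hN : 2 ≤ N) (x : ℝ) (hx : 0 < x) :
    Real.exp (-x) * ∑ k ∈ Finset.range N, x ^ k / (Nat.factorial k : ℝ) <
      1 - (1 - Real.exp (-((Nat.factorial N : ℝ) ^ (-(1 / (N : ℝ))) * x))) ^ N := by
  obtain ⟨n, rfl⟩ : ∃ n, N = n + 1 := ⟨N - 1, by omega⟩
  have hfact : (0 : ℝ) < (n + 1)! := by positivity
  have hc : (((n + 1)! : ℝ) ^ (-(1 / ((n + 1 : ℕ) : ℝ)))) ^ (n + 1) * (n + 1)! = 1 := by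
    rw [← rpow_natCast, ← rpow_mul hfact.le, neg_mul, one_div_mul_cancel (by positivity),
      rpow_neg_one, inv_mul_cancel₀ hfact.ne']
  exact exp_neg_mul_expPartialSum_lt (by omega) (rpow_pos_of_pos hfact _) hc hx
end

section
/- For real α > 2, s > 0, and a positive integer m, the improper integral ∫_0^∞ (1 − (1 + (s/m)·t^{−α})^{−m}) · t dt converges and equals ζ(m) · (s/m)^{2/α}, where ζ(m) = −Γ(m + 2/α) · Γ(−2/α) / (α · Γ(m)). -/
/-!
With `δ = 2/α ∈ (0, 1)`, the substitution `y = (s/m) t^(-α)` turns the integral into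
`α⁻¹ (s/m)^δ ∫_0^∞ (1 - (1+y)^(-m)) y^(-δ-1) dy`. Since
`(1 - (1+y)^(-(m+1))) - (1 - (1+y)^(-m)) = y (1+y)^(-(m+1))`, raising `m` by one adds the Beta
integral of the second kind `∫_0^∞ y^(-δ) (1+y)^(-(m+1)) dy = B(1-δ, m+δ)` (reduced to Euler's
integral by `y = u/(1-u)`). Summing, the inner integral is `(m/δ) B(1-δ, m+δ)`, and
`Γ(1-δ) = -δ Γ(-δ)`, `Γ(m+1) = m Γ(m)` turn this into `-Γ(m+δ) Γ(-δ) / Γ(m)`.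
-/

open Real MeasureTheory Set

open ProbabilityTheory (beta)

section BetaIntegral

variable {a b : ℝ}

lemma ofReal_rpow_mul_one_sub_rpow {x : ℝ} (hx : x ∈ Icc (0 : ℝ) 1) :
    ((x ^ (a - 1) * (1 - x) ^ (b - 1) : ℝ) : ℂ) =
      (x : ℂ) ^ ((a : ℂ) - 1) * (1 - (x : ℂ)) ^ ((b : ℂ) - 1) := by
  push_cast [Complex.ofReal_cpow hx.1, Complex.ofReal_cpow (sub_nonneg.2 hx.2)]
  rfl

lemma integrableOn_rpow_mul_one_sub_rpow (ha : 0 < a) (hb : 0 < b) :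
    IntegrableOn (fun x : ℝ => x ^ (a - 1) * (1 - x) ^ (b - 1)) (Ioo 0 1) := by
  have hF := Complex.betaIntegral_convergent (u := a) (v := b) (by simpa) (by simpa)
  rw [intervalIntegrable_iff_integrableOn_Ioc_of_le zero_le_one] at hF
  refine IntegrableOn.congr_fun (Integrable.re (hF.mono_set Ioo_subset_Ioc_self))
    (fun x hx => ?_) measurableSet_Ioo
  simp [← ofReal_rpow_mul_one_sub_rpow (Ioo_subset_Icc_self hx)]

lemma integral_rpow_mul_one_sub_rpow (ha : 0 < a) (hb : 0 < b) :
    ∫ x in Ioo (0 : ℝ) 1, x ^ (a - 1) * (1 - x) ^ (b - 1) = beta a b := by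
  rw [← integral_Ioc_eq_integral_Ioo, ← intervalIntegral.integral_of_le zero_le_one]
  apply Complex.ofReal_injective
  rw [← intervalIntegral.integral_ofReal, intervalIntegral.integral_congr
    (fun x hx => ofReal_rpow_mul_one_sub_rpow (by rwa [uIcc_of_le zero_le_one] at hx)),
    ← Complex.betaIntegral, Complex.betaIntegral_eq_Gamma_mul_div _ _ (by simpa) (by simpa)]
  simp [beta, ← Complex.Gamma_ofReal]

lemma hasDerivAt_div_one_sub {u : ℝ} (hu : u ≠ 1) :
    HasDerivAt (fun u : ℝ => u / (1 - u)) ((1 - u) ^ 2)⁻¹ u :=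
  ((hasDerivAt_id' u).fun_div ((hasDerivAt_id' u).const_sub 1) (sub_ne_zero.2 hu.symm)).congr_deriv
    (by ring)

lemma injOn_div_one_sub : InjOn (fun u : ℝ => u / (1 - u)) (Iio 1) := by
  intro u (hu : u < 1) v (hv : v < 1) huv
  have hu' : 1 - u ≠ 0 := by linarith
  have hv' : 1 - v ≠ 0 := by linarith
  field_simp at huv
  linarith

lemma image_div_one_sub_Ioo : (fun u : ℝ => u / (1 - u)) '' Ioo 0 1 = Ioi 0 := by
  ext x
  constructor
  · rintro ⟨u, ⟨hu0, hu1⟩, rfl⟩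
    exact div_pos hu0 (sub_pos.2 hu1)
  · intro (hx : 0 < x)
    refine ⟨x / (1 + x), ⟨by positivity, (div_lt_one (by positivity)).2 (by linarith)⟩, ?_⟩
    field_simp
    ring

lemma abs_deriv_smul_rpow_mul_one_add_rpow {u : ℝ} (hu : u ∈ Ioo (0 : ℝ) 1) :
    |((1 - u) ^ 2)⁻¹| • ((u / (1 - u)) ^ (a - 1) * (1 + u / (1 - u)) ^ (-(a + b))) =
      u ^ (a - 1) * (1 - u) ^ (b - 1) := by
  have h1u : 0 < 1 - u := sub_pos.2 hu.2
  have hsum : 1 + u / (1 - u) = (1 - u)⁻¹ := by field_simp; ring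
  rw [abs_of_pos (by positivity), smul_eq_mul, hsum, div_rpow hu.1.le h1u.le, inv_rpow h1u.le,
    ← rpow_neg h1u.le, neg_neg, ← rpow_natCast, ← rpow_neg h1u.le, div_eq_mul_inv,
    ← rpow_neg h1u.le, mul_left_comm, mul_assoc, ← rpow_add h1u, ← rpow_add h1u]
  congr 2
  push_cast
  ring

lemma integrableOn_rpow_mul_one_add_rpow (ha : 0 < a) (hb : 0 < b) :
    IntegrableOn (fun x : ℝ => x ^ (a - 1) * (1 + x) ^ (-(a + b))) (Ioi 0) := by
  rw [← image_div_one_sub_Ioo, integrableOn_image_iff_integrableOn_abs_deriv_smul measurableSet_Ioo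
    (fun u hu => (hasDerivAt_div_one_sub hu.2.ne).hasDerivWithinAt)
    (injOn_div_one_sub.mono Ioo_subset_Iio_self)]
  exact (integrableOn_rpow_mul_one_sub_rpow ha hb).congr_fun
    (fun u hu => (abs_deriv_smul_rpow_mul_one_add_rpow hu).symm) measurableSet_Ioo

lemma integral_rpow_mul_one_add_rpow (ha : 0 < a) (hb : 0 < b) :
    ∫ x in Ioi (0 : ℝ), x ^ (a - 1) * (1 + x) ^ (-(a + b)) = beta a b := by
  rw [← image_div_one_sub_Ioo, integral_image_eq_integral_abs_deriv_smul measurableSet_Ioo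
    (fun u hu => (hasDerivAt_div_one_sub hu.2.ne).hasDerivWithinAt)
    (injOn_div_one_sub.mono Ioo_subset_Iio_self),
    setIntegral_congr_fun measurableSet_Ioo (fun u hu => abs_deriv_smul_rpow_mul_one_add_rpow hu),
    integral_rpow_mul_one_sub_rpow ha hb]

lemma ProbabilityTheory.beta_add_one_right (hb : b ≠ 0) (hab : a + b ≠ 0) :
    beta a (b + 1) = b / (a + b) * beta a b := by
  rw [beta, beta, ← add_assoc, Gamma_add_one hb, Gamma_add_one hab]
  field_simp

end BetaIntegral

section NakagamiIntegral

variable {δ : ℝ}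

lemma one_sub_inv_one_add_pow_succ_mul_rpow {y : ℝ} (hy : 0 < y) (m : ℕ) :
    (1 - ((1 + y) ^ (m + 1))⁻¹) * y ^ (-δ - 1) =
      (1 - ((1 + y) ^ m)⁻¹) * y ^ (-δ - 1) +
        y ^ (1 - δ - 1) * (1 + y) ^ (-(1 - δ + (m + δ))) := by
  have h1y : 0 < 1 + y := by linarith
  rw [show 1 - δ - 1 = 1 + (-δ - 1) by ring, rpow_add hy, rpow_one,
    show 1 - δ + (m + δ) = ((m + 1 : ℕ) : ℝ) by push_cast; ring, rpow_neg h1y.le, rpow_natCast]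
  field_simp
  ring

lemma integrableOn_one_sub_inv_one_add_pow_mul_rpow (hδ0 : 0 < δ) (hδ1 : δ < 1) (m : ℕ) :
    IntegrableOn (fun y : ℝ => (1 - ((1 + y) ^ m)⁻¹) * y ^ (-δ - 1)) (Ioi 0) := by
  induction m with
  | zero => simp
  | succ m ih =>
    refine (integrableOn_congr_fun (fun y hy => one_sub_inv_one_add_pow_succ_mul_rpow hy m)
      measurableSet_Ioi).mpr (ih.add ?_)
    exact integrableOn_rpow_mul_one_add_rpow (by linarith) (by positivity)

lemma integral_one_sub_inv_one_add_pow_mul_rpow (hδ0 : 0 < δ) (hδ1 : δ < 1) (m : ℕ) :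
    ∫ y in Ioi (0 : ℝ), (1 - ((1 + y) ^ m)⁻¹) * y ^ (-δ - 1) =
      m / δ * beta (1 - δ) (m + δ) := by
  induction m with
  | zero => simp
  | succ m ih =>
    rw [setIntegral_congr_fun measurableSet_Ioi
        (fun y hy => one_sub_inv_one_add_pow_succ_mul_rpow hy m),
      integral_add (integrableOn_one_sub_inv_one_add_pow_mul_rpow hδ0 hδ1 m)
        (integrableOn_rpow_mul_one_add_rpow (by linarith) (by positivity)),
      ih, integral_rpow_mul_one_add_rpow (by linarith) (by positivity), Nat.cast_succ,
      add_right_comm, ProbabilityTheory.beta_add_one_right (by positivity) (by linarith),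
      show 1 - δ + (m + δ) = (m : ℝ) + 1 by ring]
    field_simp

lemma natCast_div_mul_beta_one_sub_eq {m : ℕ} (hm : m ≠ 0) (hδ : δ ≠ 0) :
    m / δ * beta (1 - δ) (m + δ) = -(Gamma (m + δ) * Gamma (-δ) / Gamma m) := by
  have hΓm : Gamma m ≠ 0 := (Gamma_pos_of_pos (Nat.cast_pos.2 (Nat.pos_of_ne_zero hm))).ne'
  rw [beta, show 1 - δ + (m + δ) = m + 1 by ring, sub_eq_neg_add,
    Gamma_add_one (neg_ne_zero.2 hδ), Gamma_add_one (Nat.cast_ne_zero.2 hm)]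
  field_simp

end NakagamiIntegral

section MellinSubstitution

variable (f : ℝ → ℝ)

lemma rpow_sub_one_mul_rpow_div_sub_one {p q t : ℝ} (hp : p ≠ 0) (ht : 0 < t) :
    t ^ (p - 1) * (t ^ p) ^ (q / p - 1) = t ^ (q - 1) := by
  rw [← rpow_mul ht.le, ← rpow_add ht]
  congr 1
  field_simp
  ring

lemma integrableOn_Ioi_comp_rpow_mul_rpow_iff {p : ℝ} (q : ℝ) (hp : p ≠ 0) :
    IntegrableOn (fun t => f (t ^ p) * t ^ (q - 1)) (Ioi 0) ↔
      IntegrableOn (fun y => f y * y ^ (q / p - 1)) (Ioi 0) := by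
  refine (integrable_const_mul_iff (isUnit_iff_ne_zero.2 (abs_ne_zero.2 hp)) _).symm.trans
    (Iff.trans ?_ (integrableOn_Ioi_comp_rpow_iff _ hp))
  refine integrableOn_congr_fun (fun t ht => ?_) measurableSet_Ioi
  rw [smul_eq_mul, ← rpow_sub_one_mul_rpow_div_sub_one hp ht]
  ring

lemma integral_comp_rpow_mul_rpow_Ioi {p : ℝ} (q : ℝ) (hp : p ≠ 0) :
    ∫ t in Ioi 0, f (t ^ p) * t ^ (q - 1) = |p|⁻¹ * ∫ y in Ioi 0, f y * y ^ (q / p - 1) := by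
  rw [← integral_comp_rpow_Ioi (fun y => f y * y ^ (q / p - 1)) hp, ← integral_const_mul]
  refine setIntegral_congr_fun measurableSet_Ioi (fun t ht => ?_)
  rw [smul_eq_mul, mul_left_comm _ (f _), mul_assoc, rpow_sub_one_mul_rpow_div_sub_one hp ht]
  field_simp

lemma rpow_sub_one_eq_rpow_one_sub_mul_mul_rpow {s c y : ℝ} (hc : 0 < c) (hy : 0 < y) :
    y ^ (s - 1) = c ^ (1 - s) * (c * y) ^ (s - 1) := by
  rw [mul_rpow hc.le hy.le, ← mul_assoc, ← rpow_add hc]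
  simp

lemma integrableOn_Ioi_comp_mul_left_mul_rpow_iff (s : ℝ) {c : ℝ} (hc : 0 < c) :
    IntegrableOn (fun y => f (c * y) * y ^ (s - 1)) (Ioi 0) ↔
      IntegrableOn (fun y => f y * y ^ (s - 1)) (Ioi 0) := by
  have hscale := integrableOn_Ioi_comp_mul_left_iff (fun y => f y * y ^ (s - 1)) 0 hc
  rw [mul_zero] at hscale
  rw [← hscale, integrableOn_congr_fun
    (fun y (hy : y ∈ Ioi 0) => by rw [rpow_sub_one_eq_rpow_one_sub_mul_mul_rpow hc hy,
      mul_left_comm]) measurableSet_Ioi]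
  exact integrable_const_mul_iff (isUnit_iff_ne_zero.2 (by positivity)) _

lemma integral_comp_mul_left_mul_rpow_Ioi (s : ℝ) {c : ℝ} (hc : 0 < c) :
    ∫ y in Ioi 0, f (c * y) * y ^ (s - 1) = c ^ (-s) * ∫ y in Ioi 0, f y * y ^ (s - 1) := by
  rw [setIntegral_congr_fun measurableSet_Ioi
      (fun y (hy : y ∈ Ioi 0) => by rw [rpow_sub_one_eq_rpow_one_sub_mul_mul_rpow hc hy,
        mul_left_comm]), integral_const_mul,
    integral_comp_mul_left_Ioi (fun y => f y * y ^ (s - 1)) 0 hc, mul_zero, smul_eq_mul,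
    ← mul_assoc, ← rpow_neg_one, ← rpow_add hc]
  ring_nf

end MellinSubstitution

/-- Interference functional under Nakagami-m fading, strongest association:
`∫_0^∞ (1 − (1 + (s/m) t^{−α})^{−m}) t dt = ζ(m) (s/m)^{2/α}` with
`ζ(m) = −Γ(m + 2/α)Γ(−2/α)/(αΓ(m))`. -/
theorem interference_integral_nakagami (α s : ℝ) (m : ℕ) (hα : 2 < α) (hs : 0 < s)
    (hm : 0 < m) :
    IntegrableOn (fun t : ℝ => (1 - ((1 + (s / m) * t ^ (-α)) ^ m)⁻¹) * t) (Ioi 0) ∧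
    ∫ t in Ioi (0:ℝ), (1 - ((1 + (s / m) * t ^ (-α)) ^ m)⁻¹) * t =
      (-(Real.Gamma ((m : ℝ) + 2 / α) * Real.Gamma (-(2 / α)) / (α * Real.Gamma m))) *
        (s / m) ^ (2 / α) := by
  have hα0 : 0 < α := by linarith
  have hδ0 : 0 < 2 / α := by positivity
  have hδ1 : 2 / α < 1 := (div_lt_one hα0).2 hα
  have hc : 0 < s / m := div_pos hs (Nat.cast_pos.2 hm)
  have hp : -α ≠ 0 := neg_ne_zero.2 hα0.ne'
  have hintegrand : (fun t : ℝ => (1 - ((1 + (s / m) * t ^ (-α)) ^ m)⁻¹) * t) =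
      fun t => (1 - ((1 + (s / m) * t ^ (-α)) ^ m)⁻¹) * t ^ ((2 : ℝ) - 1) := by
    ext t
    norm_num
  rw [hintegrand]
  constructor
  · rw [integrableOn_Ioi_comp_rpow_mul_rpow_iff (fun y => 1 - ((1 + s / m * y) ^ m)⁻¹) 2 hp,
      integrableOn_Ioi_comp_mul_left_mul_rpow_iff (fun y => 1 - ((1 + y) ^ m)⁻¹) _ hc, div_neg]
    exact integrableOn_one_sub_inv_one_add_pow_mul_rpow hδ0 hδ1 m
  · rw [integral_comp_rpow_mul_rpow_Ioi (fun y => 1 - ((1 + s / m * y) ^ m)⁻¹) 2 hp,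
      integral_comp_mul_left_mul_rpow_Ioi (fun y => 1 - ((1 + y) ^ m)⁻¹) _ hc, div_neg,
      integral_one_sub_inv_one_add_pow_mul_rpow hδ0 hδ1 m,
      natCast_div_mul_beta_one_sub_eq hm.ne' hδ0.ne', abs_neg, abs_of_pos hα0, neg_neg]
    field_simp
end

section
/- Fix h > 0 and c > 0, and define P(λ) = 2πλ ∫_0^∞ exp(−πλ·(r² + h²)·c − πλ·r²) · r dr for λ > 0. Then P(λ) = exp(−πλ·h²·c)/(1 + c); in particular lim_{λ→0⁺} P(λ) = 1/(1+c), lim_{λ→∞} P(λ) = 0, and P is strictly decreasing in λ. -/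
/-! Factoring out `exp (-πλh²c)` leaves the Gaussian moment `∫₀^∞ r e^{-b r²} dr = 1/(2b)` with
`b = πλ(1 + c)`; the rest is monotonicity and continuity of `λ ↦ exp (-πλh²c)`. -/

open Real MeasureTheory Set Filter

theorem integral_mul_exp_neg_mul_sq_Ioi {b : ℝ} (hb : 0 < b) :
    ∫ r in Ioi (0:ℝ), r * exp (-b * r ^ 2) = (2 * b)⁻¹ := by
  exact_mod_cast integral_mul_cexp_neg_mul_sq (b := (b : ℂ)) (by simpa using hb)

/-- Coverage probability with elevated BSs, closest association:
`P(λ) = 2πλ ∫_0^∞ e^{−πλ(r²+h²)c − πλr²} r dr = e^{−πλh²c}/(1+c)`,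
with limits `1/(1+c)` as `λ → 0⁺` and `0` as `λ → ∞`, and strict monotone decrease. -/
theorem coverage_elevated_closest (h c : ℝ) (hh : 0 < h) (hc : 0 < c) :
    (∀ lam : ℝ, 0 < lam →
      2 * π * lam *
          ∫ r in Ioi (0:ℝ),
            Real.exp (-(π * lam * (r ^ 2 + h ^ 2) * c) - π * lam * r ^ 2) * r =
        Real.exp (-(π * lam * h ^ 2 * c)) / (1 + c)) ∧
    Tendsto (fun lam : ℝ => Real.exp (-(π * lam * h ^ 2 * c)) / (1 + c))
      (nhdsWithin 0 (Ioi 0)) (nhds (1 / (1 + c))) ∧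
    Tendsto (fun lam : ℝ => Real.exp (-(π * lam * h ^ 2 * c)) / (1 + c)) atTop (nhds 0) ∧
    StrictAntiOn (fun lam : ℝ => Real.exp (-(π * lam * h ^ 2 * c)) / (1 + c)) (Ioi 0) := by
  have hk : 0 < π * h ^ 2 * c := by positivity
  refine ⟨fun lam hlam => ?_, ?_, ?_, fun a _ b _ hab => by dsimp only; gcongr⟩
  · have split_integrand : ∀ r : ℝ,
        exp (-(π * lam * (r ^ 2 + h ^ 2) * c) - π * lam * r ^ 2) * r =
          exp (-(π * lam * h ^ 2 * c)) * (r * exp (-(π * lam * (1 + c)) * r ^ 2)) := by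
      intro r
      rw [mul_left_comm, ← exp_add]
      ring_nf
    simp_rw [split_integrand, integral_const_mul,
      integral_mul_exp_neg_mul_sq_Ioi (by positivity : 0 < π * lam * (1 + c))]
    field_simp
  · have hcont : Continuous fun lam : ℝ => exp (-(π * lam * h ^ 2 * c)) / (1 + c) := by fun_prop
    simpa using (hcont.tendsto 0).mono_left nhdsWithin_le_nhds
  · have hexp : Tendsto (fun lam : ℝ => exp (-(π * h ^ 2 * c * lam))) atTop (nhds 0) :=
      tendsto_exp_neg_atTop_nhds_zero.comp (tendsto_id.const_mul_atTop hk)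
    convert hexp.div_const (1 + c) using 4
    · ring
    · simp
end

section
/- For θ > 0 and α = 4, the closed-form Nakagami-2 coverage probability for closest BS association, P₂(θ) = (A·(A·η − 1/2) − 1/2) / (A·η − 1/2)², where A = (3/2)(1+θ) and η = 1 + √θ·arctan(√θ), is strictly greater than the Rayleigh coverage probability P₁(θ) = 1/η. -/
open Real

/-!
Write `x = Aη - 1/2`. Since `Aη = x + 1/2`, one has `η (A x - 1/2) = x² + (x - η)/2`, so
`P₂ > 1/η` is equivalent to `x > η`, i.e. to `(A - 1) η > 1/2`. This holds because
`A - 1 = 1/2 + 3θ/2 > 1/2` and `η ≥ 1`.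
-/

lemma one_div_lt_of_lt_mul_sub_half {A η : ℝ} (hη : 0 < η) (h : η < A * η - 1 / 2) :
    1 / η < (A * (A * η - 1 / 2) - 1 / 2) / (A * η - 1 / 2) ^ 2 := by
  have hx : 0 < A * η - 1 / 2 := hη.trans h
  have key : η * (A * (A * η - 1 / 2) - 1 / 2) =
      (A * η - 1 / 2) ^ 2 + ((A * η - 1 / 2) - η) / 2 := by ring
  rw [div_lt_div_iff₀ hη (by positivity)]
  linarith

lemma one_le_one_add_sqrt_mul_arctan_sqrt (θ : ℝ) : 1 ≤ 1 + √θ * arctan √θ := by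
  have := mul_nonneg (sqrt_nonneg θ) (arctan_nonneg.mpr (sqrt_nonneg θ))
  linarith

/-- Nakagami-2 beats Rayleigh for closest association, `α = 4`:
with `A = (3/2)(1+θ)` and `η = 1 + √θ arctan √θ`,
`(A(Aη − 1/2) − 1/2)/(Aη − 1/2)² > 1/η` for all `θ > 0`. -/
theorem nakagami2_coverage_gt_rayleigh (θ : ℝ) (hθ : 0 < θ) :
    ((3 / 2 * (1 + θ)) * ((3 / 2 * (1 + θ)) * (1 + Real.sqrt θ * Real.arctan (Real.sqrt θ))
        - 1 / 2) - 1 / 2) /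
      ((3 / 2 * (1 + θ)) * (1 + Real.sqrt θ * Real.arctan (Real.sqrt θ)) - 1 / 2) ^ 2 >
      1 / (1 + Real.sqrt θ * Real.arctan (Real.sqrt θ)) := by
  have hη := one_le_one_add_sqrt_mul_arctan_sqrt θ
  refine one_div_lt_of_lt_mul_sub_half (by linarith) ?_
  nlinarith
end

section
/- Fix h > 0 and α > 2, and for s > 0 let η(s, h) = 1 + (2/h²)∫_h^∞ (1 − 1/(1 + s·t^{−α}))·t dt. Then the strongest-association coverage probability with elevated BSs, P(λ) = 2πλ ∫_h^∞ exp(−πλ·h²·(η(θ·r^α, h) − 1)) · r dr, satisfies P(λ) → 0 as λ → ∞. -/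
open Real MeasureTheory Set Filter


lemma gauss_deriv (c h : ℝ) (hc : 0 < c) : ∀ x ∈ Ici h,
    HasDerivAt (fun r => -(1 / (2 * c)) * Real.exp (-(c * (r ^ 2 - h ^ 2))))
      (Real.exp (-(c * (x ^ 2 - h ^ 2))) * x) x := by
  intro x _
  have h1 : HasDerivAt (fun r : ℝ => -(c * (r ^ 2 - h ^ 2))) (-(c * (2 * x))) x := by
    have := ((hasDerivAt_pow 2 x).sub_const (h ^ 2)).const_mul c
    simpa [Pi.neg_def] using this.neg
  have h2 := (h1.exp).const_mul (-(1 / (2 * c)))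
  refine h2.congr_deriv ?_
  have hc' : c ≠ 0 := hc.ne'
  have hq : (1 / (2 * c)) * c = 1 / 2 := by
    rw [one_div, mul_inv, mul_assoc, inv_mul_cancel₀ hc', mul_one, one_div]
  linear_combination (2 * Real.exp (-(c * (x ^ 2 - h ^ 2))) * x) * hq

lemma gauss_lim (c h : ℝ) (hc : 0 < c) :
    Tendsto (fun r => -(1 / (2 * c)) * Real.exp (-(c * (r ^ 2 - h ^ 2)))) atTop (nhds 0) := by
  have h0 : Tendsto (fun r : ℝ => -(c * (r ^ 2 - h ^ 2))) atTop atBot := by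
    have h1 : Tendsto (fun r : ℝ => c * (r ^ 2 - h ^ 2)) atTop atTop := by
      apply Tendsto.const_mul_atTop hc
      exact tendsto_atTop_add_const_right _ _ (tendsto_pow_atTop (by norm_num))
    exact tendsto_neg_atTop_atBot.comp h1
  have := (Real.tendsto_exp_atBot.comp h0).const_mul (-(1 / (2 * c)))
  simpa using this

lemma gauss_int (c h : ℝ) (hc : 0 < c) (hh : 0 ≤ h) :
    ∫ r in Ioi h, Real.exp (-(c * (r ^ 2 - h ^ 2))) * r = 1 / (2 * c) := by
  have := integral_Ioi_of_hasDerivAt_of_nonneg' (gauss_deriv c h hc)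
    (fun x hx => mul_nonneg (Real.exp_nonneg _) (hh.trans hx.out.le)) (gauss_lim c h hc)
  rw [this]
  simp

lemma gauss_integrable (c h : ℝ) (hc : 0 < c) (hh : 0 ≤ h) :
    IntegrableOn (fun r => Real.exp (-(c * (r ^ 2 - h ^ 2))) * r) (Ioi h) := by
  exact integrableOn_Ioi_deriv_of_nonneg' (gauss_deriv c h hc)
    (fun x hx => mul_nonneg (Real.exp_nonneg _) (hh.trans hx.out.le)) (gauss_lim c h hc)

lemma inner_nonneg (s α t : ℝ) (hs : 0 < s) (ht : 0 < t) :
    0 ≤ (1 - 1 / (1 + s * t ^ (-α))) * t := by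
  have hx : 0 < s * t ^ (-α) := mul_pos hs (Real.rpow_pos_of_pos ht _)
  have : 1 / (1 + s * t ^ (-α)) ≤ 1 := by
    rw [div_le_one (by linarith)]; linarith
  have := sub_nonneg.2 this
  exact mul_nonneg this ht.le

lemma inner_integrable (h α s : ℝ) (hh : 0 < h) (hα : 2 < α) (hs : 0 < s) :
    IntegrableOn (fun t => (1 - 1 / (1 + s * t ^ (-α))) * t) (Ioi h) := by
  have hmeas : AEStronglyMeasurable (fun t => (1 - 1 / (1 + s * t ^ (-α))) * t)
      (volume.restrict (Ioi h)) := by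
    apply ContinuousOn.aestronglyMeasurable ?_ measurableSet_Ioi
    have hc : ContinuousOn (fun t : ℝ => t ^ (-α)) (Ioi h) := fun t ht =>
      (Real.continuousAt_rpow_const t (-α) (Or.inl (ne_of_gt (hh.trans ht)))).continuousWithinAt
    apply ContinuousOn.mul ?_ continuousOn_id
    apply ContinuousOn.sub continuousOn_const
    apply ContinuousOn.div continuousOn_const
      (continuousOn_const.add (continuousOn_const.mul hc))
    intro t ht
    have : 0 < s * t ^ (-α) := mul_pos hs (Real.rpow_pos_of_pos (hh.trans ht) _)
    exact ne_of_gt (by show (0:ℝ) < 1 + s * t ^ (-α); linarith)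
  apply Integrable.mono' ((integrableOn_Ioi_rpow_of_lt (by linarith : 1 - α < -1) hh).const_mul s)
    hmeas
  filter_upwards [ae_restrict_mem measurableSet_Ioi] with t ht
  have ht0 : 0 < t := hh.trans ht
  have hx : 0 < s * t ^ (-α) := mul_pos hs (Real.rpow_pos_of_pos ht0 _)
  rw [Real.norm_of_nonneg (inner_nonneg s α t hs ht0)]
  have h1 : 1 - 1 / (1 + s * t ^ (-α)) ≤ s * t ^ (-α) := by
    have hy : 1 / (1 + s * t ^ (-α)) * (1 + s * t ^ (-α)) = 1 :=
      one_div_mul_cancel (by positivity)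
    nlinarith [hx, hy]
  calc (1 - 1 / (1 + s * t ^ (-α))) * t ≤ s * t ^ (-α) * t :=
        mul_le_mul_of_nonneg_right h1 ht0.le
    _ = s * t ^ (1 - α) := by
        rw [mul_assoc, show (1:ℝ) - α = -α + 1 by ring, Real.rpow_add ht0, Real.rpow_one]

lemma lower_piece (h α s : ℝ) (hh : 0 < h) (hα : 2 < α) (hs : 0 < s)
    (b m : ℝ) (hb : h ≤ b) (hm : 0 < m)
    (hbd : ∀ t ∈ Ioc h b, m ≤ s * t ^ (-α)) :
    (1 - 1 / (1 + m)) * ((b ^ 2 - h ^ 2) / 2) ≤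
      ∫ t in Ioi h, (1 - 1 / (1 + s * t ^ (-α))) * t := by
  have hint := inner_integrable h α s hh hα hs
  have step1 : ∫ t in Ioc h b, (1 - 1 / (1 + s * t ^ (-α))) * t ≤
      ∫ t in Ioi h, (1 - 1 / (1 + s * t ^ (-α))) * t := by
    apply setIntegral_mono_set hint
    · filter_upwards [ae_restrict_mem measurableSet_Ioi] with t ht
      exact inner_nonneg s α t hs (hh.trans ht)
    · exact HasSubset.Subset.eventuallyLE Ioc_subset_Ioi_self
  have step2 : ∫ t in Ioc h b, (1 - 1 / (1 + m)) * t ≤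
      ∫ t in Ioc h b, (1 - 1 / (1 + s * t ^ (-α))) * t := by
    apply setIntegral_mono_on
    · exact (continuous_const.mul continuous_id).integrableOn_Ioc
    · exact hint.mono_set Ioc_subset_Ioi_self
    · exact measurableSet_Ioc
    · intro t ht
      have ht0 : 0 < t := hh.trans ht.1
      have hx := hbd t ht
      have : 1 / (1 + s * t ^ (-α)) ≤ 1 / (1 + m) :=
        one_div_le_one_div_of_le (by linarith) (by linarith)
      exact mul_le_mul_of_nonneg_right (by linarith) ht0.le
  have step3 : ∫ t in Ioc h b, (1 - 1 / (1 + m)) * t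
      = (1 - 1 / (1 + m)) * ((b ^ 2 - h ^ 2) / 2) := by
    rw [← intervalIntegral.integral_of_le hb, intervalIntegral.integral_const_mul,
      integral_id]
  linarith

lemma bd1 (h α θ r t : ℝ) (hh : 0 < h) (hθ : 0 < θ) (hα0 : (0:ℝ) ≤ α) (hr : h < r)
    (ht : t ∈ Ioc h r) : θ ≤ θ * r ^ α * t ^ (-α) := by
  have ht0 : (0:ℝ) < t := hh.trans ht.1
  have hta : t ^ α ≤ r ^ α := Real.rpow_le_rpow ht0.le ht.2 hα0
  have htp : (0:ℝ) < t ^ α := Real.rpow_pos_of_pos ht0 _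
  rw [Real.rpow_neg ht0.le]
  have h1 : 1 ≤ r ^ α * (t ^ α)⁻¹ := by
    rw [← div_eq_mul_inv, le_div_iff₀ htp, one_mul]; exact hta
  calc θ = θ * 1 := by ring
    _ ≤ θ * (r ^ α * (t ^ α)⁻¹) := mul_le_mul_of_nonneg_left h1 hθ.le
    _ = θ * r ^ α * (t ^ α)⁻¹ := by ring

lemma bd2 (h α θ r t : ℝ) (hh : 0 < h) (hθ : 0 < θ) (hα0 : (0:ℝ) ≤ α) (hr : h < r)
    (ht : t ∈ Ioc h (2 * h)) : θ * 2 ^ (-α) ≤ θ * r ^ α * t ^ (-α) := by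
  have ht0 : (0:ℝ) < t := hh.trans ht.1
  have hta : t ^ α ≤ (2 * h) ^ α := Real.rpow_le_rpow ht0.le ht.2 hα0
  have hra : h ^ α ≤ r ^ α := Real.rpow_le_rpow hh.le hr.le hα0
  have htp : (0:ℝ) < t ^ α := Real.rpow_pos_of_pos ht0 _
  have hinv : ((2 * h) ^ α)⁻¹ ≤ (t ^ α)⁻¹ := inv_anti₀ htp hta
  have key : θ * 2 ^ (-α) = θ * h ^ α * ((2 * h) ^ α)⁻¹ := by
    rw [Real.mul_rpow (by norm_num : (0:ℝ) ≤ 2) hh.le, Real.rpow_neg (by norm_num : (0:ℝ) ≤ 2)]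
    have hhα : (0:ℝ) < h ^ α := Real.rpow_pos_of_pos hh _
    field_simp
  rw [key, Real.rpow_neg ht0.le]
  calc θ * h ^ α * ((2 * h) ^ α)⁻¹ ≤ θ * r ^ α * ((2 * h) ^ α)⁻¹ :=
        mul_le_mul_of_nonneg_right (mul_le_mul_of_nonneg_left hra hθ.le) (by positivity)
    _ ≤ θ * r ^ α * (t ^ α)⁻¹ := by
        have : (0:ℝ) < r ^ α := Real.rpow_pos_of_pos (hh.trans hr) _
        exact mul_le_mul_of_nonneg_left hinv (by positivity)


/-- Strongest-association coverage with elevated BSs vanishes as density grows: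
with `η(s) = 1 + (2/h²)∫_h^∞ (1 − 1/(1 + s t^{−α})) t dt`,
`P(λ) = 2πλ ∫_h^∞ e^{−πλh²(η(θr^α) − 1)} r dr → 0` as `λ → ∞`. -/
theorem coverage_strongest_elevated_vanishes (h α θ : ℝ) (hh : 0 < h) (hα : 2 < α)
    (hθ : 0 < θ) :
    Tendsto
      (fun lam : ℝ =>
        2 * π * lam *
          ∫ r in Ioi h,
            Real.exp
              (-(π * lam * h ^ 2 *
                ((1 + (2 / h ^ 2) *
                    ∫ t in Ioi h, (1 - 1 / (1 + θ * r ^ α * t ^ (-α))) * t) - 1))) * r)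
      atTop (nhds 0) := by
  have hα0 : (0:ℝ) ≤ α := by linarith
  set c0 : ℝ := 1 - 1 / (1 + θ) with hc0def
  have hm2 : 0 < θ * 2 ^ (-α) := mul_pos hθ (Real.rpow_pos_of_pos (by norm_num) _)
  set c2 : ℝ := 1 - 1 / (1 + θ * 2 ^ (-α)) with hc2def
  have hc0 : 0 < c0 := by
    rw [hc0def, sub_pos, div_lt_one (by linarith)]; linarith
  have hc2 : 0 < c2 := by
    rw [hc2def, sub_pos, div_lt_one (by linarith)]; linarith
  set D : ℝ := 3 * π * c2 * h ^ 2 / 2 with hDdef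
  have hD : 0 < D := by positivity
  apply tendsto_of_tendsto_of_tendsto_of_le_of_le'
    (tendsto_const_nhds : Tendsto (fun _ : ℝ => (0:ℝ)) atTop (nhds 0))
    (show Tendsto (fun lam : ℝ => (2 / c0) * Real.exp (-(D * lam))) atTop (nhds 0) from ?_)
  · -- lower bound: 0 ≤ F lam eventually
    filter_upwards [eventually_ge_atTop (0:ℝ)] with lam hlam
    apply mul_nonneg (by positivity)
    apply setIntegral_nonneg measurableSet_Ioi
    intro r hr
    exact mul_nonneg (Real.exp_nonneg _) ((hh.trans hr).le)
  · -- upper bound eventually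
    filter_upwards [eventually_gt_atTop (0:ℝ)] with lam hlam
    set c : ℝ := π * lam * c0 / 2 with hcdef
    have hc : 0 < c := by positivity
    have hpl : (0:ℝ) < π * lam := by positivity
    have key : ∀ r ∈ Ioi h,
        Real.exp (-(π * lam * h ^ 2 *
            ((1 + (2 / h ^ 2) *
                ∫ t in Ioi h, (1 - 1 / (1 + θ * r ^ α * t ^ (-α))) * t) - 1))) * r ≤
          Real.exp (-(D * lam)) * (Real.exp (-(c * (r ^ 2 - h ^ 2))) * r) := by
      intro r hr
      have hr0 : (0:ℝ) < r := hh.trans hr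
      have hs : (0:ℝ) < θ * r ^ α := mul_pos hθ (Real.rpow_pos_of_pos hr0 _)
      set I : ℝ := ∫ t in Ioi h, (1 - 1 / (1 + θ * r ^ α * t ^ (-α))) * t with hIdef
      have hI1 : c0 * ((r ^ 2 - h ^ 2) / 2) ≤ I :=
        lower_piece h α (θ * r ^ α) hh hα hs r θ (le_of_lt hr) hθ
          (fun t ht => bd1 h α θ r t hh hθ hα0 hr ht)
      have hI2 : c2 * (((2 * h) ^ 2 - h ^ 2) / 2) ≤ I :=
        lower_piece h α (θ * r ^ α) hh hα hs (2 * h) (θ * 2 ^ (-α)) (by linarith) hm2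
          (fun t ht => bd2 h α θ r t hh hθ hα0 hr ht)
      have hE : π * lam * h ^ 2 * ((1 + (2 / h ^ 2) * I) - 1) = 2 * π * lam * I := by
        have hh2 : h ^ 2 ≠ 0 := by positivity
        field_simp
        ring
      have hexp : D * lam + c * (r ^ 2 - h ^ 2) ≤ 2 * π * lam * I := by
        have hA := mul_le_mul_of_nonneg_left hI1 hpl.le
        have hB := mul_le_mul_of_nonneg_left hI2 hpl.le
        rw [hDdef, hcdef]
        nlinarith [hA, hB]
      calc Real.exp (-(π * lam * h ^ 2 * ((1 + (2 / h ^ 2) * I) - 1))) * r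
          ≤ Real.exp (-(D * lam + c * (r ^ 2 - h ^ 2))) * r := by
            apply mul_le_mul_of_nonneg_right _ hr0.le
            apply Real.exp_le_exp.2
            rw [hE]
            linarith
        _ = Real.exp (-(D * lam)) * (Real.exp (-(c * (r ^ 2 - h ^ 2))) * r) := by
            rw [← mul_assoc, ← Real.exp_add]
            ring_nf
    have hgi : IntegrableOn
        (fun r => Real.exp (-(D * lam)) * (Real.exp (-(c * (r ^ 2 - h ^ 2))) * r)) (Ioi h) :=
      (gauss_integrable c h hc hh.le).const_mul _
    have hint_le : (∫ r in Ioi h,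
        Real.exp (-(π * lam * h ^ 2 *
            ((1 + (2 / h ^ 2) *
                ∫ t in Ioi h, (1 - 1 / (1 + θ * r ^ α * t ^ (-α))) * t) - 1))) * r) ≤
        Real.exp (-(D * lam)) * (1 / (2 * c)) := by
      have := integral_mono_of_nonneg (f := fun r =>
          Real.exp (-(π * lam * h ^ 2 *
            ((1 + (2 / h ^ 2) *
                ∫ t in Ioi h, (1 - 1 / (1 + θ * r ^ α * t ^ (-α))) * t) - 1))) * r)
          (g := fun r => Real.exp (-(D * lam)) * (Real.exp (-(c * (r ^ 2 - h ^ 2))) * r))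
          (μ := volume.restrict (Ioi h))
          ?_ hgi ?_
      · refine this.trans (le_of_eq ?_)
        rw [integral_const_mul, gauss_int c h hc hh.le]
      · filter_upwards [ae_restrict_mem measurableSet_Ioi] with r hr
        exact mul_nonneg (Real.exp_nonneg _) ((hh.trans hr).le)
      · filter_upwards [ae_restrict_mem measurableSet_Ioi] with r hr
        exact key r hr
    calc 2 * π * lam * ∫ r in Ioi h,
          Real.exp (-(π * lam * h ^ 2 *
            ((1 + (2 / h ^ 2) *
                ∫ t in Ioi h, (1 - 1 / (1 + θ * r ^ α * t ^ (-α))) * t) - 1))) * r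
        ≤ 2 * π * lam * (Real.exp (-(D * lam)) * (1 / (2 * c))) :=
          mul_le_mul_of_nonneg_left hint_le (by positivity)
      _ = (2 / c0) * Real.exp (-(D * lam)) := by
          rw [hcdef]
          have hπ : π ≠ 0 := Real.pi_ne_zero
          field_simp
  · -- upper function tends to 0
    have h1 : Tendsto (fun lam : ℝ => -(D * lam)) atTop atBot := by
      have := Tendsto.const_mul_atTop hD (tendsto_id (α := ℝ) (x := atTop))
      exact tendsto_neg_atTop_atBot.comp this
    have := (Real.tendsto_exp_atBot.comp h1).const_mul (2 / c0)
    simpa using this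
end
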